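/- arXiv:math/0502063 — 2 statements merged into one kernel-verified Lean document; each statement's English description precedes it below -/
import Mathlib

section
/- For every x ∈ ℝ with x ≥ 0 and every t ∈ ℂ with |t| < 1, the series Σ_{n=0}^{∞} β_{n,q}(x) t^n/n! converges and equals ((q−1)/log q)·e^{t/(1−q)} − t·Σ_{n=0}^{∞} q^{n+x} e^{[n+x]_q t} (the generating-function identity for the q-Bernoulli polynomials; both series converge absolutely). -/
open scoped BigOperators

/-- The q-integer `[x]_q = (1 - q^x)/(1 - q)` (real exponent, via `rpow`). -/
noncomputable def qnum (q x : ℝ) : ℝ := (1 - q ^ x) / (1 - q)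

/-- `c_0(q) = (q-1)/log q` and `c_i(q) = i/[i]_q` for `i ≥ 1`. -/
noncomputable def qc (q : ℝ) : ℕ → ℝ
  | 0 => (q - 1) / Real.log q
  | (i + 1) => ((i : ℝ) + 1) / qnum q ((i : ℝ) + 1)

/-- The q-Bernoulli numbers `β_{n,q} = (1-q)^{-n} ∑_{i=0}^n C(n,i) (-1)^i c_i(q)`. -/
noncomputable def qBernoulli (q : ℝ) (n : ℕ) : ℝ :=
  (1 - q)⁻¹ ^ n * ∑ i ∈ Finset.range (n + 1), (n.choose i : ℝ) * (-1 : ℝ) ^ i * qc q i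

/-- The q-Bernoulli polynomials `β_{n,q}(x) = ∑_{i=0}^n C(n,i) q^{xi} β_{i,q} [x]_q^{n-i}`. -/
noncomputable def qBernoulliPoly (q : ℝ) (n : ℕ) (x : ℝ) : ℝ :=
  ∑ i ∈ Finset.range (n + 1),
    (n.choose i : ℝ) * q ^ (x * (i : ℝ)) * qBernoulli q i * qnum q x ^ (n - i)

/-- The generalized q-Bernoulli polynomials attached to a Dirichlet character `χ` mod `f`:
`β_{n,χ,q}(x) = [f]_q^{n-1} ∑_{a=1}^f χ(a) β_{n,q^f}((x+a)/f)`. -/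
noncomputable def genQBernoulliPoly {f : ℕ} (χ : DirichletCharacter ℂ f) (q : ℝ) (n : ℕ)
    (x : ℝ) : ℂ :=
  ((qnum q (f : ℝ) : ℝ) : ℂ) ^ ((n : ℤ) - 1) *
    ∑ a ∈ Finset.range f,
      χ ((a + 1 : ℕ) : ZMod f) * ((qBernoulliPoly (q ^ f) n ((x + ((a : ℝ) + 1)) / f) : ℝ) : ℂ)

private lemma key_binom_sum (y : ℝ) {n i : ℕ} (hi : i ≤ n) :
    ∑ k ∈ Finset.range (n + 1),
      (n.choose k : ℝ) * (k.choose i : ℝ) * y ^ k * (1 - y) ^ (n - k)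
      = (n.choose i : ℝ) * y ^ i := by
  rw [Finset.range_eq_Ico, ← Finset.sum_Ico_consecutive _ (Nat.zero_le i) (by omega : i ≤ n + 1)]
  have h0 : ∑ k ∈ Finset.Ico 0 i,
      (n.choose k : ℝ) * (k.choose i : ℝ) * y ^ k * (1 - y) ^ (n - k) = 0 := by
    refine Finset.sum_eq_zero fun k hk => ?_
    have hki : k < i := (Finset.mem_Ico.1 hk).2
    simp [Nat.choose_eq_zero_of_lt hki]
  rw [h0, zero_add, Finset.sum_Ico_eq_sum_range]
  have hrange : n + 1 - i = n - i + 1 := by omega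
  rw [hrange]
  have hterm : ∀ a ∈ Finset.range (n - i + 1),
      (n.choose (i + a) : ℝ) * ((i + a).choose i : ℝ) * y ^ (i + a) * (1 - y) ^ (n - (i + a))
      = ((n.choose i : ℝ) * y ^ i) *
        (y ^ a * (1 - y) ^ (n - i - a) * ((n - i).choose a : ℝ)) := by
    intro a ha
    have ha' : a < n - i + 1 := Finset.mem_range.1 ha
    have h1 : i + a ≤ n := by omega
    have h2 : (n.choose (i + a)) * ((i + a).choose i) = n.choose i * (n - i).choose a := by
      have h := Nat.choose_mul (n := n) (Nat.le_add_right i a)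
      simpa using h
    have h3 : n - (i + a) = n - i - a := by omega
    have h2' : (n.choose (i + a) : ℝ) * ((i + a).choose i : ℝ)
        = (n.choose i : ℝ) * ((n - i).choose a : ℝ) := by exact_mod_cast congrArg (Nat.cast : ℕ → ℝ) h2
    rw [h3, pow_add, h2']
    ring
  rw [Finset.sum_congr rfl hterm, ← Finset.mul_sum, ← add_pow]
  simp


private lemma qc_succ_eq {q : ℝ} (hq0 : 0 < q) (m : ℕ) :
    qc q (m + 1) = ((m : ℝ) + 1) * (1 - q) / (1 - q ^ (m + 1)) := by
  show ((m : ℝ) + 1) / qnum q ((m : ℝ) + 1) = _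
  have h : q ^ (((m : ℝ)) + 1) = q ^ (m + 1 : ℕ) := by
    rw [show ((m : ℝ) + 1) = ((m + 1 : ℕ) : ℝ) by push_cast; ring, Real.rpow_natCast]
  rw [qnum, h, div_div_eq_mul_div]

private lemma qBernoulliPoly_eq {q : ℝ} (hq0 : 0 < q) (hq1 : q < 1) (n : ℕ) (x : ℝ) :
    qBernoulliPoly q n x = (1 - q)⁻¹ ^ n *
      ∑ i ∈ Finset.range (n + 1),
        (n.choose i : ℝ) * (-1) ^ i * (q ^ x) ^ i * qc q i := by
  have hq' : (1 : ℝ) - q ≠ 0 := by intro h; linarith [hq1]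
  set y := q ^ x with hy
  have hyi : ∀ i : ℕ, q ^ (x * (i : ℝ)) = y ^ i := by
    intro i
    rw [Real.rpow_mul hq0.le, Real.rpow_natCast]
  have step1 : qBernoulliPoly q n x = (1 - q)⁻¹ ^ n *
      ∑ k ∈ Finset.range (n + 1), (n.choose k : ℝ) * y ^ k *
        (∑ i ∈ Finset.range (n + 1), (k.choose i : ℝ) * (-1) ^ i * qc q i) *
        (1 - y) ^ (n - k) := by
    rw [qBernoulliPoly, Finset.mul_sum]
    refine Finset.sum_congr rfl fun k hk => ?_
    have hkn : k ≤ n := Finset.mem_range_succ_iff.mp hk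
    have hS : (∑ i ∈ Finset.range (k + 1), (k.choose i : ℝ) * (-1) ^ i * qc q i)
        = ∑ i ∈ Finset.range (n + 1), (k.choose i : ℝ) * (-1) ^ i * qc q i := by
      refine Finset.sum_subset (Finset.range_subset_range.mpr (by omega)) fun i _ hi => ?_
      have hik : k < i := by
        by_contra h
        exact hi (Finset.mem_range_succ_iff.mpr (by omega))
      simp [Nat.choose_eq_zero_of_lt hik]
    rw [qBernoulli, qnum, hyi k, ← hS]
    have hpow : (1 - q)⁻¹ ^ n = (1 - q)⁻¹ ^ k * (1 - q)⁻¹ ^ (n - k) := by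
      rw [← pow_add, Nat.add_sub_cancel' hkn]
    rw [hpow, div_pow, div_eq_mul_inv ((1 - y) ^ (n - k)), ← inv_pow]
    ring
  rw [step1]
  congr 1
  have step2 : ∀ k ∈ Finset.range (n + 1),
      (n.choose k : ℝ) * y ^ k *
        (∑ i ∈ Finset.range (n + 1), (k.choose i : ℝ) * (-1) ^ i * qc q i) * (1 - y) ^ (n - k)
      = ∑ i ∈ Finset.range (n + 1),
          ((-1) ^ i * qc q i) * ((n.choose k : ℝ) * (k.choose i : ℝ) * y ^ k * (1 - y) ^ (n - k)) := by
    intro k _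
    rw [Finset.mul_sum, Finset.sum_mul]
    exact Finset.sum_congr rfl fun i _ => by ring
  rw [Finset.sum_congr rfl step2, Finset.sum_comm]
  refine Finset.sum_congr rfl fun i hi => ?_
  rw [← Finset.mul_sum, key_binom_sum y (Finset.mem_range_succ_iff.mp hi)]
  ring


private lemma qc_abs_le {q : ℝ} (hq0 : 0 < q) (hq1 : q < 1) (i : ℕ) :
    |qc q i| ≤ (|(q - 1) / Real.log q| + 1) * ((i : ℝ) + 1) := by
  cases i with
  | zero =>
    have : qc q 0 = (q - 1) / Real.log q := rfl
    rw [this]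
    push_cast
    nlinarith [abs_nonneg ((q - 1) / Real.log q)]
  | succ m =>
    rw [qc_succ_eq hq0]
    have h1 : (0:ℝ) < 1 - q := by linarith
    have h2 : q ^ (m + 1) ≤ q := pow_le_of_le_one hq0.le hq1.le (Nat.succ_ne_zero m)
    have h3 : (0:ℝ) < 1 - q ^ (m + 1) := by linarith
    rw [abs_of_nonneg (by positivity)]
    have hle : ((m : ℝ) + 1) * (1 - q) / (1 - q ^ (m + 1)) ≤ (m : ℝ) + 1 := by
      rw [div_le_iff₀ h3]
      nlinarith [Nat.cast_nonneg (α := ℝ) m]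
    have hA : (0:ℝ) ≤ |(q - 1) / Real.log q| := abs_nonneg _
    push_cast
    nlinarith [Nat.cast_nonneg (α := ℝ) m]

private lemma cexp_tsum (z : ℂ) : Complex.exp z = ∑' n : ℕ, z ^ n / (n.factorial : ℂ) := by
  rw [Complex.exp_eq_exp_ℂ, NormedSpace.exp_eq_tsum_div]

theorem qBernoulliPoly_generatingFunction (q : ℝ) (hq0 : 0 < q) (hq1 : q < 1)
    (x : ℝ) (hx : 0 ≤ x) (t : ℂ) (ht : ‖t‖ < 1) :
    Summable (fun n : ℕ =>
      ‖((qBernoulliPoly q n x : ℝ) : ℂ) * t ^ n / (Nat.factorial n : ℂ)‖) ∧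
    Summable (fun n : ℕ =>
      ‖((q ^ ((n : ℝ) + x) : ℝ) : ℂ) * Complex.exp (((qnum q ((n : ℝ) + x) : ℝ) : ℂ) * t)‖) ∧
    ∑' n : ℕ, ((qBernoulliPoly q n x : ℝ) : ℂ) * t ^ n / (Nat.factorial n : ℂ)
      = (((q - 1) / Real.log q : ℝ) : ℂ) * Complex.exp (t / ((1 - q : ℝ) : ℂ))
        - t * ∑' n : ℕ, ((q ^ ((n : ℝ) + x) : ℝ) : ℂ)
            * Complex.exp (((qnum q ((n : ℝ) + x) : ℝ) : ℂ) * t) := by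
  have h1q : (0:ℝ) < 1 - q := by linarith
  have hq' : (1:ℝ) - q ≠ 0 := ne_of_gt h1q
  have hqC : ((1 - q : ℝ) : ℂ) ≠ 0 := Complex.ofReal_ne_zero.mpr hq'
  set y : ℝ := q ^ x with hy
  have hy0 : 0 < y := Real.rpow_pos_of_pos hq0 x
  have hy1 : y ≤ 1 := Real.rpow_le_one hq0.le hq1.le hx
  set u : ℂ := t / ((1 - q : ℝ) : ℂ) with hu
  have ht' : t = ((1 - q : ℝ) : ℂ) * u := by
    rw [hu, mul_div_cancel₀ _ hqC]
  set r : ℝ := ‖u‖ with hr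
  have hr0 : (0:ℝ) ≤ r := norm_nonneg u
  set M : ℝ := |(q - 1) / Real.log q| + 1 with hM
  have hM0 : (0:ℝ) < M := by positivity
  set f : ℕ → ℂ := fun i =>
    (-1 : ℂ) ^ i * ((y : ℝ) : ℂ) ^ i * ((qc q i : ℝ) : ℂ) * u ^ i / (i.factorial : ℂ) with hf
  set g : ℕ → ℂ := fun k => u ^ k / (k.factorial : ℂ) with hg
  have hnormf : ∀ i, ‖f i‖ = y ^ i * |qc q i| * r ^ i / (i.factorial : ℝ) := by
    intro i
    rw [hf]
    simp only [norm_div, norm_mul, norm_pow, norm_neg, norm_one, one_pow, Complex.norm_real,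
      Real.norm_eq_abs, Complex.norm_natCast, one_mul]
    rw [abs_of_pos hy0]
  have hfs : Summable fun i => ‖f i‖ := by
    refine Summable.of_nonneg_of_le (fun i => norm_nonneg _) (fun i => ?_)
      ((Real.summable_pow_div_factorial (2 * r)).mul_left M)
    rw [hnormf i]
    have hfac : (0:ℝ) < (i.factorial : ℝ) := by exact_mod_cast i.factorial_pos
    rw [div_le_iff₀ hfac]
    have hMdiv : M * ((2 * r) ^ i / (i.factorial : ℝ)) * (i.factorial : ℝ)
        = M * (2 * r) ^ i := by field_simp
    rw [hMdiv]
    have b1 : y ^ i ≤ 1 := pow_le_one₀ hy0.le hy1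
    have b2 : |qc q i| ≤ M * ((i : ℝ) + 1) := by
      have := qc_abs_le hq0 hq1 i; rw [hM]; linarith
    have b3 : ((i : ℝ) + 1) ≤ 2 ^ i := by
      exact_mod_cast (Nat.lt_two_pow_self (n := i))
    have hrp : (0:ℝ) ≤ r ^ i := pow_nonneg hr0 i
    calc y ^ i * |qc q i| * r ^ i
        ≤ 1 * (M * ((i : ℝ) + 1)) * r ^ i := by
          apply mul_le_mul_of_nonneg_right _ hrp
          exact mul_le_mul b1 b2 (abs_nonneg _) (by linarith [hM0])
      _ = M * (((i : ℝ) + 1) * r ^ i) := by ring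
      _ ≤ M * ((2:ℝ) ^ i * r ^ i) := by
          apply mul_le_mul_of_nonneg_left (mul_le_mul_of_nonneg_right b3 hrp) hM0.le
      _ = M * (2 * r) ^ i := by rw [mul_pow]
  have hgs : Summable fun k => ‖g k‖ := by
    refine (Real.summable_pow_div_factorial r).congr fun k => ?_
    rw [hg]
    simp [norm_div, norm_pow, hr]
  -- Cauchy product term identity
  have hterm : ∀ n : ℕ, ((qBernoulliPoly q n x : ℝ) : ℂ) * t ^ n / (Nat.factorial n : ℂ)
      = ∑ i ∈ Finset.range (n + 1), f i * g (n - i) := by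
    intro n
    rw [qBernoulliPoly_eq hq0 hq1 n x, ← hy]
    push_cast
    rw [Finset.mul_sum, Finset.sum_mul, Finset.sum_div]
    refine Finset.sum_congr rfl fun i hi => ?_
    have hin : i ≤ n := Finset.mem_range_succ_iff.mp hi
    have key : (n.choose i : ℂ) * (i.factorial : ℂ) * ((n - i).factorial : ℂ)
        = (n.factorial : ℂ) := by exact_mod_cast Nat.choose_mul_factorial_mul_factorial hin
    have hupow : u ^ i * u ^ (n - i) = u ^ n := by rw [← pow_add, Nat.add_sub_cancel' hin]
    have hfacn : ((n.factorial : ℂ)) ≠ 0 := by exact_mod_cast n.factorial_ne_zero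
    have hfaci : ((i.factorial : ℂ)) ≠ 0 := by exact_mod_cast i.factorial_ne_zero
    have hfacni : (((n - i).factorial : ℂ)) ≠ 0 := by exact_mod_cast (n - i).factorial_ne_zero
    rw [hf, hg, ht']
    simp only []
    have hq1C : (1:ℂ) - (q:ℂ) ≠ 0 := by
      have := hqC; push_cast at this; exact this
    have hch : ((n.choose i : ℂ)) ≠ 0 := Nat.cast_ne_zero.mpr (Nat.choose_pos hin).ne'

    rw [div_mul_div_comm, mul_assoc _ (u ^ i) _, hupow, ← key]
    push_cast
    field_simp
    rw [mul_pow]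
    rw [one_div, inv_pow]; field_simp
  
  have hq1C : (1:ℂ) - (q:ℂ) ≠ 0 := by
    have h := hqC; push_cast at h; exact h
  have hsum1 : Summable (fun n : ℕ =>
      ‖((qBernoulliPoly q n x : ℝ) : ℂ) * t ^ n / (Nat.factorial n : ℂ)‖) := by
    refine (summable_norm_sum_mul_range_of_summable_norm hfs hgs).congr fun n => ?_
    rw [hterm n]
  have hcauchy : (∑' i, f i) * (∑' k, g k)
      = ∑' n : ℕ, ((qBernoulliPoly q n x : ℝ) : ℂ) * t ^ n / (Nat.factorial n : ℂ) := by
    rw [tsum_mul_tsum_eq_tsum_sum_range_of_summable_norm hfs hgs]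
    exact (tsum_congr hterm).symm
  have hgsum : ∑' k, g k = Complex.exp u := (cexp_tsum u).symm
  -- the second series
  set w : ℕ → ℝ := fun n => q ^ n * y with hw
  have hw0 : ∀ n, 0 < w n := fun n => mul_pos (pow_pos hq0 n) hy0
  have hwq : ∀ n, w n ≤ q ^ n := fun n => by
    have h1 : (0:ℝ) ≤ q ^ n := (pow_pos hq0 n).le
    calc w n = q ^ n * y := rfl
      _ ≤ q ^ n * 1 := mul_le_mul_of_nonneg_left hy1 h1
      _ = q ^ n := mul_one _
  have hw1 : ∀ n, w n ≤ 1 := fun n =>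
    (hwq n).trans (pow_le_one₀ hq0.le hq1.le)
  have hqpow : ∀ n : ℕ, q ^ ((n:ℝ) + x) = w n := by
    intro n
    show q ^ ((n:ℝ) + x) = q ^ n * y
    rw [Real.rpow_add hq0, Real.rpow_natCast, ← hy]
  have hqnumeq : ∀ n : ℕ, qnum q ((n:ℝ) + x) = (1 - w n) / (1 - q) := by
    intro n; rw [qnum, hqpow n]
  have hsum2 : Summable (fun n : ℕ =>
      ‖((q ^ ((n : ℝ) + x) : ℝ) : ℂ) * Complex.exp (((qnum q ((n : ℝ) + x) : ℝ) : ℂ) * t)‖) := by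
    refine Summable.of_nonneg_of_le (fun n => norm_nonneg _) (fun n => ?_)
      ((summable_geometric_of_lt_one hq0.le hq1).mul_right (y * Real.exp (‖t‖ / (1 - q))))
    rw [norm_mul, hqpow n, hqnumeq n]
    have hre : (((((1 - w n) / (1 - q)) : ℝ) : ℂ) * t).re = ((1 - w n) / (1 - q)) * t.re :=
      Complex.re_ofReal_mul _ t
    rw [Complex.norm_exp, hre]
    have hc0 : (0:ℝ) ≤ (1 - w n) / (1 - q) := div_nonneg (by linarith [hw1 n]) h1q.le
    have hc1 : (1 - w n) / (1 - q) ≤ 1 / (1 - q) := by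
      rw [div_le_div_iff_of_pos_right h1q]
      linarith [hw0 n]
    have hret : t.re ≤ ‖t‖ := by
      exact Complex.re_le_norm t
    have hexp : Real.exp (((1 - w n) / (1 - q)) * t.re) ≤ Real.exp (‖t‖ / (1 - q)) := by
      apply Real.exp_le_exp.mpr
      calc ((1 - w n) / (1 - q)) * t.re ≤ ((1 - w n) / (1 - q)) * ‖t‖ :=
            mul_le_mul_of_nonneg_left hret hc0
        _ ≤ (1 / (1 - q)) * ‖t‖ := mul_le_mul_of_nonneg_right hc1 (norm_nonneg t)
        _ = ‖t‖ / (1 - q) := by ring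
    have hnw : ‖((w n : ℝ) : ℂ)‖ = w n := by
      rw [Complex.norm_real, Real.norm_eq_abs, abs_of_pos (hw0 n)]
    rw [hnw]
    calc w n * Real.exp (((1 - w n) / (1 - q)) * t.re)
        ≤ w n * Real.exp (‖t‖ / (1 - q)) := mul_le_mul_of_nonneg_left hexp (hw0 n).le
      _ = (q ^ n * y) * Real.exp (‖t‖ / (1 - q)) := rfl
      _ = q ^ n * (y * Real.exp (‖t‖ / (1 - q))) := by ring
  have harg : ∀ n : ℕ, ((((1 - w n) / (1 - q) : ℝ)) : ℂ) * t = u - ((w n : ℝ) : ℂ) * u := by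
    intro n
    rw [ht']
    push_cast
    field_simp
  have hterm2 : ∀ n : ℕ,
      ((q ^ ((n : ℝ) + x) : ℝ) : ℂ) * Complex.exp (((qnum q ((n : ℝ) + x) : ℝ) : ℂ) * t)
      = Complex.exp u * (((w n : ℝ) : ℂ) * Complex.exp (-(((w n : ℝ) : ℂ) * u))) := by
    intro n
    rw [hqpow n, hqnumeq n, harg n, sub_eq_add_neg, Complex.exp_add]
    ring
  -- Fubini setup
  set b : ℕ × ℕ → ℂ := fun p =>
    ((w p.1 : ℝ) : ℂ) * (-(((w p.1 : ℝ) : ℂ) * u)) ^ p.2 / (p.2.factorial : ℂ) with hbdef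
  have hbnorm : ∀ p : ℕ × ℕ, ‖b p‖ = w p.1 * (w p.1 * r) ^ p.2 / (p.2.factorial : ℝ) := by
    intro p
    rw [hbdef]
    simp only [norm_div, norm_mul, norm_pow, norm_neg, Complex.norm_real, Real.norm_eq_abs,
      Complex.norm_natCast, abs_of_pos (hw0 p.1)]
    rfl
  have hbs : Summable fun p : ℕ × ℕ => ‖b p‖ := by
    refine Summable.of_nonneg_of_le (fun p => norm_nonneg _) (fun p => ?_)
      (Summable.mul_of_nonneg (summable_geometric_of_lt_one hq0.le hq1)
        (Real.summable_pow_div_factorial r) (fun n => (pow_pos hq0 n).le)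
        (fun m => by positivity))
    rw [hbnorm p]
    have hfac : (0:ℝ) < (p.2.factorial : ℝ) := by exact_mod_cast p.2.factorial_pos
    have hnum : w p.1 * (w p.1 * r) ^ p.2 ≤ q ^ p.1 * r ^ p.2 := by
      rw [mul_pow]
      have h1 : w p.1 * w p.1 ^ p.2 = w p.1 ^ (p.2 + 1) := by rw [pow_succ]; ring
      have h2 : w p.1 ^ (p.2 + 1) ≤ w p.1 :=
        pow_le_of_le_one (hw0 p.1).le (hw1 p.1) (Nat.succ_ne_zero _)
      have h3 : (0:ℝ) ≤ r ^ p.2 := pow_nonneg hr0 _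
      calc w p.1 * (w p.1 ^ p.2 * r ^ p.2) = (w p.1 * w p.1 ^ p.2) * r ^ p.2 := by ring
        _ ≤ w p.1 * r ^ p.2 := by rw [h1]; exact mul_le_mul_of_nonneg_right h2 h3
        _ ≤ q ^ p.1 * r ^ p.2 := mul_le_mul_of_nonneg_right (hwq p.1) h3
    calc w p.1 * (w p.1 * r) ^ p.2 / (p.2.factorial : ℝ)
        ≤ q ^ p.1 * r ^ p.2 / (p.2.factorial : ℝ) := by
          rw [div_le_div_iff_of_pos_right hfac]
          exact hnum
      _ = q ^ p.1 * (r ^ p.2 / (p.2.factorial : ℝ)) := by ring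
  have hbsum : Summable b := hbs.of_norm
  
  -- marginal over m
  have hA : ∀ n : ℕ, ∑' m : ℕ, b (n, m)
      = ((w n : ℝ) : ℂ) * Complex.exp (-(((w n : ℝ) : ℂ) * u)) := by
    intro n
    rw [cexp_tsum, ← tsum_mul_left]
    refine tsum_congr fun m => ?_
    rw [hbdef]
    exact (mul_div_assoc _ _ _)
  -- marginal over n
  have hq1Cm : ∀ m : ℕ, (1:ℂ) - (q:ℂ) ^ (m + 1) ≠ 0 := by
    intro m
    have hlt : q ^ (m + 1) < 1 := pow_lt_one₀ hq0.le hq1 (Nat.succ_ne_zero m)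
    have h0 : ((1 - q ^ (m + 1) : ℝ) : ℂ) ≠ 0 := Complex.ofReal_ne_zero.mpr (by linarith)
    push_cast at h0
    exact h0
  set hh : ℕ → ℂ := fun m =>
    (-1:ℂ) ^ m * u ^ m * ((y : ℝ) : ℂ) ^ (m + 1) /
      ((m.factorial : ℂ) * (1 - (q:ℂ) ^ (m + 1))) with hhdef
  have hBm : ∀ m : ℕ, ∑' n : ℕ, b (n, m) = hh m := by
    intro m
    have hrwb : ∀ n : ℕ, b (n, m)
        = ((q:ℂ) ^ (m + 1)) ^ n * (((y : ℝ) : ℂ) ^ (m + 1) * (-u) ^ m / (m.factorial : ℂ)) := by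
      intro n
      rw [hbdef]
      show ((w n : ℝ) : ℂ) * (-(((w n : ℝ) : ℂ) * u)) ^ m / (m.factorial : ℂ) = _
      have : ((w n : ℝ) : ℂ) = (q:ℂ) ^ n * ((y : ℝ) : ℂ) := by
        show ((q ^ n * y : ℝ) : ℂ) = _
        push_cast
        ring
      rw [this]
      ring
    rw [tsum_congr hrwb, tsum_mul_right]
    have hnormq : ‖(q:ℂ) ^ (m + 1)‖ < 1 := by
      rw [norm_pow, Complex.norm_real, Real.norm_eq_abs, abs_of_pos hq0]
      exact pow_lt_one₀ hq0.le hq1 (Nat.succ_ne_zero m)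
    rw [tsum_geometric_of_norm_lt_one hnormq, hhdef]
    have hfacm : ((m.factorial : ℂ)) ≠ 0 := by exact_mod_cast m.factorial_ne_zero
    rw [neg_pow]
    field_simp [hq1Cm m]
  have h1fib : ∀ n : ℕ, Summable fun m => b (n, m) := fun n => hbsum.prod_factor n
  have h2fib : ∀ m : ℕ, Summable fun n => b (n, m) := by
    intro m
    exact hbsum.comp_injective (i := fun n => (n, m))
      (fun a b hab => by simpa using (Prod.ext_iff.mp hab).1)
  have hE1 : ∑' p : ℕ × ℕ, b p = ∑' (n : ℕ) (m : ℕ), b (n, m) := Summable.tsum_prod' hbsum h1fib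
  have hE2 : ∑' (m : ℕ) (n : ℕ), b (n, m) = ∑' (n : ℕ) (m : ℕ), b (n, m) :=
    Summable.tsum_comm' hbsum h1fib h2fib
  have hsecond : ∑' n : ℕ, ((q ^ ((n : ℝ) + x) : ℝ) : ℂ)
        * Complex.exp (((qnum q ((n : ℝ) + x) : ℝ) : ℂ) * t)
      = Complex.exp u * ∑' m : ℕ, hh m := by
    rw [tsum_congr hterm2, tsum_mul_left]
    congr 1
    rw [tsum_congr fun n => (hA n).symm, ← hE1, hE1, ← hE2]
    exact tsum_congr hBm
  -- assemble
  refine ⟨hsum1, hsum2, ?_⟩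
  have hfsum : Summable f := hfs.of_norm
  have hsplit := Summable.tsum_eq_zero_add hfsum
  have hf0 : f 0 = (((q - 1) / Real.log q : ℝ) : ℂ) := by
    rw [hf]
    show (-1:ℂ) ^ 0 * ((y : ℝ) : ℂ) ^ 0 * ((qc q 0 : ℝ) : ℂ) * u ^ 0 / ((0).factorial : ℂ)
      = (((q - 1) / Real.log q : ℝ) : ℂ)
    have : qc q 0 = (q - 1) / Real.log q := rfl
    rw [this]
    simp
  have hfh : ∀ m : ℕ, f (m + 1) = -t * hh m := by
    intro m
    rw [hf, hhdef]
    show (-1:ℂ) ^ (m+1) * ((y : ℝ) : ℂ) ^ (m+1) * ((qc q (m+1) : ℝ) : ℂ) * u ^ (m+1)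
        / ((m+1).factorial : ℂ) = _
    rw [qc_succ_eq hq0 m, Nat.factorial_succ, ht']
    have hfacm : ((m.factorial : ℂ)) ≠ 0 := by exact_mod_cast m.factorial_ne_zero
    have hm1 : ((m:ℂ) + 1) ≠ 0 := Nat.cast_add_one_ne_zero m
    push_cast
    field_simp [hq1Cm m]
    ring
  calc ∑' n : ℕ, ((qBernoulliPoly q n x : ℝ) : ℂ) * t ^ n / (Nat.factorial n : ℂ)
      = (∑' i, f i) * (∑' k, g k) := hcauchy.symm
    _ = (f 0 + ∑' m, f (m + 1)) * Complex.exp u := by rw [hsplit, hgsum]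
    _ = (f 0 + (-t) * ∑' m, hh m) * Complex.exp u := by
        rw [tsum_congr hfh, tsum_mul_left]
    _ = f 0 * Complex.exp u - t * (Complex.exp u * ∑' m, hh m) := by ring
    _ = (((q - 1) / Real.log q : ℝ) : ℂ) * Complex.exp u
        - t * ∑' n : ℕ, ((q ^ ((n : ℝ) + x) : ℝ) : ℂ)
            * Complex.exp (((qnum q ((n : ℝ) + x) : ℝ) : ℂ) * t) := by
        rw [hf0, hsecond]
end

section
/- (Key identity underlying Theorem 6: the Euler-factor-removed distribution relation.) Let p be a prime number and let F be a positive integer divisible both by p and by the conductor f of χ. Then for every integer n ≥ 1 and every real x ≥ 0, β_{n,χ,q}(x) − χ(p)·[p]_q^{n−1}·β_{n,χ,q^p}(x/p) = [F]_q^{n−1} Σ_{1 ≤ a ≤ F, p ∤ a} χ(a) β_{n,q^F}((x+a)/F), where β_{n,χ,q^p} denotes the generalized q-Bernoulli polynomial with q replaced by q^p. -/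
open scoped BigOperators

open Finset

lemma binom_aux (n j : ℕ) (hj : j ≤ n) (t : ℝ) :
    ∑ i ∈ range (n + 1), (n.choose i : ℝ) * (i.choose j) * t ^ i * (1 - t) ^ (n - i)
      = (n.choose j : ℝ) * t ^ j := by
  rw [range_eq_Ico, ← Finset.sum_Ico_consecutive _ (Nat.zero_le j) (by omega : j ≤ n + 1)]
  have h0 : ∑ i ∈ Ico 0 j, (n.choose i : ℝ) * (i.choose j) * t ^ i * (1 - t) ^ (n - i) = 0 := by
    apply Finset.sum_eq_zero
    intro i hi
    simp only [mem_Ico] at hi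
    rw [Nat.choose_eq_zero_of_lt hi.2]
    ring
  rw [h0, zero_add, Finset.sum_Ico_eq_sum_range]
  have key : ∀ k ∈ range (n + 1 - j), (n.choose (j + k) : ℝ) * ((j + k).choose j) * t ^ (j + k)
      * (1 - t) ^ (n - (j + k)) = (n.choose j : ℝ) * t ^ j *
        ((n - j).choose k * t ^ k * (1 - t) ^ (n - j - k)) := by
    intro k hk
    simp only [mem_range] at hk
    have h1 : n.choose (j + k) * (j + k).choose j = n.choose j * (n - j).choose k := by
      have := Nat.choose_mul (n := n) (show j ≤ j + k by omega)
      simpa using this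
    have h2 : n - (j + k) = n - j - k := by omega
    have h3 : t ^ (j + k) = t ^ j * t ^ k := pow_add t j k
    rw [h2, h3, ← Nat.cast_mul, h1]
    push_cast
    ring
  rw [Finset.sum_congr rfl key, ← Finset.mul_sum]
  have : ∑ k ∈ range (n + 1 - j), ((n - j).choose k : ℝ) * t ^ k * (1 - t) ^ (n - j - k) = 1 := by
    have hb := add_pow t (1 - t) (n - j)
    have : (t + (1 - t)) = (1 : ℝ) := by ring
    rw [this, one_pow] at hb
    rw [show n + 1 - j = (n - j) + 1 by omega]
    have he : ∑ k ∈ range (n - j + 1), ((n - j).choose k : ℝ) * t ^ k * (1 - t) ^ (n - j - k)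
        = ∑ k ∈ range (n - j + 1), t ^ k * (1 - t) ^ (n - j - k) * ((n - j).choose k : ℝ) := by
      apply Finset.sum_congr rfl; intro k _; ring
    rw [he]; exact hb.symm
  rw [this, mul_one]

lemma qBernoulliPoly_closed (q : ℝ) (hq0 : 0 < q) (n : ℕ) (x : ℝ) :
    qBernoulliPoly q n x
      = (1 - q)⁻¹ ^ n * ∑ j ∈ range (n + 1),
          (n.choose j : ℝ) * (-1 : ℝ) ^ j * (q ^ x) ^ j * qc q j := by
  set t := q ^ x with ht
  have hrp : ∀ i : ℕ, q ^ (x * (i : ℝ)) = t ^ i := by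
    intro i
    rw [ht, ← Real.rpow_natCast (q ^ x) i, ← Real.rpow_mul hq0.le]
  unfold qBernoulliPoly qBernoulli qnum
  calc
    ∑ i ∈ range (n + 1), (n.choose i : ℝ) * q ^ (x * (i:ℝ)) *
        ((1 - q)⁻¹ ^ i * ∑ j ∈ range (i + 1), (i.choose j : ℝ) * (-1:ℝ) ^ j * qc q j) *
        ((1 - t) / (1 - q)) ^ (n - i)
      = (1 - q)⁻¹ ^ n * ∑ i ∈ range (n + 1), ∑ j ∈ range (n + 1),
          ((n.choose i : ℝ) * (i.choose j) * t ^ i * (1 - t) ^ (n - i)) * ((-1:ℝ) ^ j * qc q j) := by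
        rw [Finset.mul_sum]
        apply Finset.sum_congr rfl
        intro i hi
        simp only [mem_range] at hi
        have hext : ∑ j ∈ range (i + 1), (i.choose j : ℝ) * (-1:ℝ) ^ j * qc q j
            = ∑ j ∈ range (n + 1), (i.choose j : ℝ) * (-1:ℝ) ^ j * qc q j := by
          apply Finset.sum_subset (Finset.range_subset_range.2 (by omega))
          intro j _ hj
          simp only [mem_range, not_lt] at hj
          rw [Nat.choose_eq_zero_of_lt (by omega)]
          ring
        rw [hext, hrp, div_pow, div_eq_mul_inv, ← inv_pow]
        simp only [Finset.mul_sum, Finset.sum_mul]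
        apply Finset.sum_congr rfl
        intro j _
        have : (1 - q)⁻¹ ^ n = (1 - q)⁻¹ ^ i * (1 - q)⁻¹ ^ (n - i) := by
          rw [← pow_add]; congr 1; omega
        rw [this]
        ring
    _ = (1 - q)⁻¹ ^ n * ∑ j ∈ range (n + 1),
          (n.choose j : ℝ) * (-1:ℝ) ^ j * t ^ j * qc q j := by
        rw [Finset.sum_comm]
        congr 1
        apply Finset.sum_congr rfl
        intro j hj
        simp only [mem_range] at hj
        rw [← Finset.sum_mul, binom_aux n j (by omega) t]
        ring

lemma one_sub_pow_ne (q : ℝ) (hq0 : 0 < q) (hq1 : q < 1) {m : ℕ} (hm : 1 ≤ m) :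
    1 - q ^ m ≠ 0 := by
  have : q ^ m < 1 := pow_lt_one₀ hq0.le hq1 (by omega)
  nlinarith

lemma key_c (q : ℝ) (hq0 : 0 < q) (hq1 : q < 1) (m : ℕ) (hm : 1 ≤ m) (j : ℕ) :
    (∑ a ∈ Finset.range m, ((q : ℝ) ^ j) ^ a) * qc (q ^ m) j = qnum q (m : ℝ) * qc q j := by
  have hq : (1 : ℝ) - q ≠ 0 := by nlinarith
  have hlog : Real.log q ≠ 0 := ne_of_lt (Real.log_neg hq0 hq1)
  have hqnum : qnum q (m : ℝ) = (1 - q ^ m) / (1 - q) := by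
    rw [qnum, Real.rpow_natCast]
  cases j with
  | zero =>
    simp only [pow_zero, one_pow, Finset.sum_const, Finset.card_range, nsmul_eq_mul, mul_one]
    show (m : ℝ) * ((q ^ m - 1) / Real.log (q ^ m)) = qnum q (m:ℝ) * ((q - 1) / Real.log q)
    rw [Real.log_pow, hqnum]
    have hm0 : (m : ℝ) ≠ 0 := by positivity
    field_simp
    ring
  | succ i =>
    have hj1 : q ^ (i + 1) ≠ 1 := by
      have : q ^ (i + 1) < 1 := pow_lt_one₀ hq0.le hq1 (by omega)
      linarith
    rw [geom_sum_eq hj1 m]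
    show ((q ^ (i+1)) ^ m - 1) / (q ^ (i+1) - 1) * (((i:ℝ) + 1) / qnum (q ^ m) ((i:ℝ) + 1))
      = qnum q (m:ℝ) * (((i:ℝ) + 1) / qnum q ((i:ℝ) + 1))
    have e1 : qnum (q ^ m) ((i:ℝ) + 1) = (1 - q ^ (m * (i+1))) / (1 - q ^ m) := by
      rw [qnum, show ((i:ℝ) + 1) = ((i + 1 : ℕ) : ℝ) by push_cast; ring,
        Real.rpow_natCast, ← pow_mul]
    have e2 : qnum q ((i:ℝ) + 1) = (1 - q ^ (i + 1)) / (1 - q) := by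
      rw [qnum, show ((i:ℝ) + 1) = ((i + 1 : ℕ) : ℝ) by push_cast; ring, Real.rpow_natCast]
    rw [e1, e2, hqnum, ← pow_mul]
    have h1 : 1 - q ^ m ≠ 0 := one_sub_pow_ne q hq0 hq1 hm
    have h2 : 1 - q ^ (i + 1) ≠ 0 := one_sub_pow_ne q hq0 hq1 (by omega)
    have h3 : 1 - q ^ (m * (i + 1)) ≠ 0 := one_sub_pow_ne q hq0 hq1 (Nat.mul_pos hm (Nat.succ_pos i))
    have h4 : q ^ (i + 1) - 1 ≠ 0 := fun h => h2 (by linarith [sub_eq_zero.mp h])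
    have h5 : q ^ ((i + 1) * m) = q ^ (m * (i + 1)) := by rw [mul_comm]
    field_simp
    rw [h5]
    ring

lemma qBernoulliPoly_dist (q : ℝ) (hq0 : 0 < q) (hq1 : q < 1) (m : ℕ) (hm : 1 ≤ m)
    (n : ℕ) (hn : 1 ≤ n) (x : ℝ) :
    qnum q (m : ℝ) ^ (n - 1) *
        ∑ a ∈ Finset.range m, qBernoulliPoly (q ^ m) n ((x + a) / m)
      = qBernoulliPoly q n x := by
  have hq : (1 : ℝ) - q ≠ 0 := by nlinarith
  have hqm0 : (0 : ℝ) < q ^ m := pow_pos hq0 m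
  have hqm : 1 - q ^ m ≠ 0 := one_sub_pow_ne q hq0 hq1 hm
  have hm0 : (m : ℝ) ≠ 0 := by positivity
  have hbase : ∀ a : ℕ, ((q ^ m : ℝ) ^ ((x + a) / m)) = q ^ x * q ^ a := by
    intro a
    rw [← Real.rpow_natCast q m, ← Real.rpow_mul hq0.le,
      show (m : ℝ) * ((x + a) / m) = x + a by field_simp,
      Real.rpow_add hq0, Real.rpow_natCast]
  have hsum : ∑ a ∈ Finset.range m, qBernoulliPoly (q ^ m) n ((x + a) / m)
      = (1 - q ^ m)⁻¹ ^ n * qnum q (m:ℝ) *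
          ∑ j ∈ Finset.range (n + 1), (n.choose j : ℝ) * (-1:ℝ) ^ j * (q ^ x) ^ j * qc q j := by
    calc
      ∑ a ∈ Finset.range m, qBernoulliPoly (q ^ m) n ((x + a) / m)
        = ∑ a ∈ Finset.range m, (1 - q ^ m)⁻¹ ^ n * ∑ j ∈ Finset.range (n + 1),
            (n.choose j : ℝ) * (-1:ℝ) ^ j * ((q ^ x) ^ j * ((q ^ j) ^ a)) * qc (q ^ m) j := by
          apply Finset.sum_congr rfl
          intro a _
          rw [qBernoulliPoly_closed (q ^ m) hqm0 n ((x + a) / m)]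
          congr 1
          apply Finset.sum_congr rfl
          intro j _
          rw [hbase a, mul_pow]
          congr 3
          rw [← pow_mul, ← pow_mul, mul_comm a j]
      _ = (1 - q ^ m)⁻¹ ^ n * ∑ j ∈ Finset.range (n + 1),
            (n.choose j : ℝ) * (-1:ℝ) ^ j * (q ^ x) ^ j *
              ((∑ a ∈ Finset.range m, ((q:ℝ) ^ j) ^ a) * qc (q ^ m) j) := by
          rw [← Finset.mul_sum, Finset.sum_comm]
          congr 1
          apply Finset.sum_congr rfl
          intro j _
          simp only [Finset.mul_sum, Finset.sum_mul]
          apply Finset.sum_congr rfl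
          intro a _
          ring
      _ = _ := by
          rw [mul_assoc]
          congr 1
          rw [Finset.mul_sum]
          apply Finset.sum_congr rfl
          intro j _
          rw [key_c q hq0 hq1 m hm j]
          ring
  rw [hsum, qBernoulliPoly_closed q hq0 n x]
  have hq' : qnum q (m:ℝ) = (1 - q ^ m) / (1 - q) := by rw [qnum, Real.rpow_natCast]
  have hfac : qnum q (m:ℝ) ^ (n-1) * ((1 - q ^ m)⁻¹ ^ n * qnum q (m:ℝ)) = (1 - q)⁻¹ ^ n := by
    rw [hq']
    have hp : ((1 - q ^ m) / (1 - q)) ^ (n-1) * ((1 - q ^ m) / (1 - q))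
        = ((1 - q ^ m) / (1 - q)) ^ n := by
      rw [← pow_succ]
      congr 1
      omega
    calc ((1 - q ^ m) / (1 - q)) ^ (n-1) * ((1 - q ^ m)⁻¹ ^ n * ((1 - q ^ m) / (1 - q)))
        = (((1 - q ^ m) / (1 - q)) ^ (n-1) * ((1 - q ^ m) / (1 - q))) * (1 - q ^ m)⁻¹ ^ n := by
          ring
      _ = (((1 - q ^ m) / (1 - q)) * (1 - q ^ m)⁻¹) ^ n := by rw [hp, ← mul_pow]
      _ = (1 - q)⁻¹ ^ n := by
          congr 1
          field_simp
  calc qnum q (m:ℝ) ^ (n-1) * ((1 - q ^ m)⁻¹ ^ n * qnum q (m:ℝ) *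
        ∑ j ∈ Finset.range (n + 1), (n.choose j : ℝ) * (-1:ℝ) ^ j * (q ^ x) ^ j * qc q j)
      = (qnum q (m:ℝ) ^ (n-1) * ((1 - q ^ m)⁻¹ ^ n * qnum q (m:ℝ))) *
        ∑ j ∈ Finset.range (n + 1), (n.choose j : ℝ) * (-1:ℝ) ^ j * (q ^ x) ^ j * qc q j := by
        ring
    _ = _ := by rw [hfac]

lemma sum_range_mul_eq {M : Type*} [AddCommMonoid M] (f m : ℕ) (g : ℕ → M) :
    ∑ b ∈ Finset.range (f * m), g b = ∑ a ∈ Finset.range f, ∑ c ∈ Finset.range m, g (a + f * c) := by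
  induction m with
  | zero => simp
  | succ m ih =>
    have h1 : f * (m + 1) = f * m + f := by ring
    rw [h1, Finset.range_eq_Ico, ← Finset.sum_Ico_consecutive _ (Nat.zero_le (f * m)) (by omega),
      ← Finset.range_eq_Ico, ih, Finset.sum_Ico_eq_sum_range]
    simp only [Finset.sum_range_succ]
    rw [Finset.sum_add_distrib]
    congr 1
    rw [show f * m + f - f * m = f by omega]
    apply Finset.sum_congr rfl
    intro k _
    congr 1
    omega

lemma sum_filter_dvd {M : Type*} [AddCommMonoid M] (p F : ℕ) (hp : 0 < p) (hpF : p ∣ F)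
    (G : ℕ → M) :
    ∑ a ∈ (Finset.range F).filter (fun a => p ∣ (a + 1)), G (a + 1)
      = ∑ b ∈ Finset.range (F / p), G (p * (b + 1)) := by
  obtain ⟨l, hl⟩ := hpF
  have hFp : F / p = l := by rw [hl, Nat.mul_div_cancel_left _ hp]
  refine Finset.sum_nbij' (fun a => (a + 1) / p - 1) (fun b => p * (b + 1) - 1) ?_ ?_ ?_ ?_ ?_
  · intro a ha
    simp only [Finset.mem_filter, Finset.mem_range] at ha ⊢
    obtain ⟨k, hk⟩ := ha.2
    have hk1 : 1 ≤ k := by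
      rcases Nat.eq_zero_or_pos k with h | h
      · subst h; omega
      · exact h
    have hdiv : (a + 1) / p = k := by rw [hk, Nat.mul_div_cancel_left _ hp]
    have hkl : k ≤ l := Nat.le_of_mul_le_mul_left (by omega) hp
    rw [hdiv, hFp]
    omega
  · intro b hb
    simp only [Finset.mem_range] at hb
    rw [hFp] at hb
    have h1 : 1 ≤ p * (b + 1) := Nat.mul_pos hp (Nat.succ_pos b)
    have h2 : p * (b + 1) ≤ p * l := Nat.mul_le_mul_left p (by omega)
    simp only [Finset.mem_filter, Finset.mem_range]
    refine ⟨by omega, ?_⟩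
    rw [show p * (b + 1) - 1 + 1 = p * (b + 1) by omega]
    exact Dvd.intro _ rfl
  · intro a ha
    simp only [Finset.mem_filter, Finset.mem_range] at ha
    obtain ⟨k, hk⟩ := ha.2
    have hk1 : 1 ≤ k := by
      rcases Nat.eq_zero_or_pos k with h | h
      · subst h; omega
      · exact h
    have hdiv : (a + 1) / p = k := by rw [hk, Nat.mul_div_cancel_left _ hp]
    rw [hdiv, show k - 1 + 1 = k by omega, ← hk]
    omega
  · intro b _
    have h1 : 1 ≤ p * (b + 1) := Nat.mul_pos hp (Nat.succ_pos b)
    rw [show p * (b + 1) - 1 + 1 = p * (b + 1) by omega, Nat.mul_div_cancel_left _ hp]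
    omega
  · intro a ha
    simp only [Finset.mem_filter, Finset.mem_range] at ha
    obtain ⟨k, hk⟩ := ha.2
    have hk1 : 1 ≤ k := by
      rcases Nat.eq_zero_or_pos k with h | h
      · subst h; omega
      · exact h
    have hdiv : (a + 1) / p = k := by rw [hk, Nat.mul_div_cancel_left _ hp]
    rw [hdiv, show k - 1 + 1 = k by omega, ← hk]

lemma qnum_mul (q : ℝ) (hq0 : 0 < q) (hq1 : q < 1) (a b : ℕ) (ha : 1 ≤ a) :
    qnum q (a : ℝ) * qnum (q ^ a) (b : ℝ) = qnum q ((a * b : ℕ) : ℝ) := by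
  have hq : (1 : ℝ) - q ≠ 0 := by nlinarith
  have hqa : 1 - q ^ a ≠ 0 := one_sub_pow_ne q hq0 hq1 ha
  rw [qnum, qnum, qnum, Real.rpow_natCast, Real.rpow_natCast, Real.rpow_natCast, ← pow_mul]
  field_simp


lemma genQB_expand {f : ℕ} (hf : 1 ≤ f) (χ : DirichletCharacter ℂ f) (q : ℝ) (hq0 : 0 < q)
    (hq1 : q < 1) (m : ℕ) (hm : 1 ≤ m) (n : ℕ) (hn : 1 ≤ n) (x : ℝ) :
    genQBernoulliPoly χ q n x
      = ((qnum q ((f * m : ℕ) : ℝ) : ℝ) : ℂ) ^ (n - 1) *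
          ∑ b ∈ Finset.range (f * m),
            χ ((b + 1 : ℕ) : ZMod f) *
              ((qBernoulliPoly (q ^ (f * m)) n ((x + ((b : ℝ) + 1)) / ((f * m : ℕ) : ℝ)) : ℝ) : ℂ) := by
  have hf0 : (f : ℝ) ≠ 0 := by positivity
  have hm0 : (m : ℝ) ≠ 0 := by positivity
  have hqf0 : (0 : ℝ) < q ^ f := pow_pos hq0 f
  have hqf1 : q ^ f < 1 := pow_lt_one₀ hq0.le hq1 (by omega)
  have hA : ∀ a : ℕ, qBernoulliPoly (q ^ f) n ((x + ((a : ℝ) + 1)) / f)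
      = qnum (q ^ f) (m : ℝ) ^ (n - 1) * ∑ c ∈ Finset.range m,
          qBernoulliPoly (q ^ (f * m)) n
            ((x + (((a + f * c : ℕ) : ℝ) + 1)) / ((f * m : ℕ) : ℝ)) := by
    intro a
    rw [← qBernoulliPoly_dist (q ^ f) hqf0 hqf1 m hm n hn ((x + ((a : ℝ) + 1)) / f)]
    congr 1
    apply Finset.sum_congr rfl
    intro c _
    rw [← pow_mul]
    congr 1
    push_cast
    field_simp
    ring
  unfold genQBernoulliPoly
  rw [show ((n : ℤ) - 1) = ((n - 1 : ℕ) : ℤ) by omega, zpow_natCast]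
  have hsum : ∑ a ∈ Finset.range f, χ ((a + 1 : ℕ) : ZMod f) *
        ((qBernoulliPoly (q ^ f) n ((x + ((a : ℝ) + 1)) / f) : ℝ) : ℂ)
      = ((qnum (q ^ f) (m : ℝ) : ℝ) : ℂ) ^ (n - 1) *
          ∑ b ∈ Finset.range (f * m), χ ((b + 1 : ℕ) : ZMod f) *
            ((qBernoulliPoly (q ^ (f * m)) n
              ((x + ((b : ℝ) + 1)) / ((f * m : ℕ) : ℝ)) : ℝ) : ℂ) := by
    rw [sum_range_mul_eq f m, Finset.mul_sum]
    apply Finset.sum_congr rfl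
    intro a _
    rw [hA a]
    push_cast
    simp only [Finset.mul_sum]
    apply Finset.sum_congr rfl
    intro c _
    have hχ : ((a : ZMod f) + (f : ZMod f) * (c : ZMod f) + 1) = ((a : ZMod f) + 1) := by
      simp [ZMod.natCast_self]
    rw [hχ]
    ring
  rw [hsum, ← mul_assoc, ← mul_pow, ← Complex.ofReal_mul,
    qnum_mul q hq0 hq1 f m hf]


theorem genQBernoulliPoly_euler_factor {f : ℕ} (hf : 1 ≤ f) (χ : DirichletCharacter ℂ f)
    (hχ : χ.IsPrimitive) (q : ℝ) (hq0 : 0 < q) (hq1 : q < 1) (p : ℕ) (hp : p.Prime)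
    (F : ℕ) (hF : 0 < F) (hpF : p ∣ F) (hfF : f ∣ F) (n : ℕ) (hn : 1 ≤ n)
    (x : ℝ) (hx : 0 ≤ x) :
    genQBernoulliPoly χ q n x
        - χ ((p : ℕ) : ZMod f) * ((qnum q (p : ℝ) : ℝ) : ℂ) ^ (n - 1)
            * genQBernoulliPoly χ (q ^ p) n (x / p)
      = ((qnum q (F : ℝ) : ℝ) : ℂ) ^ (n - 1) *
          ∑ a ∈ (Finset.range F).filter (fun a => ¬ p ∣ (a + 1)),
            χ ((a + 1 : ℕ) : ZMod f)
              * ((qBernoulliPoly (q ^ F) n ((x + ((a : ℝ) + 1)) / F) : ℝ) : ℂ) := by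
  have : NeZero f := ⟨by omega⟩
  have hp1 : 1 ≤ p := hp.pos
  have hp0 : (p : ℝ) ≠ 0 := by positivity
  have hF0 : (F : ℝ) ≠ 0 := by positivity
  set G : ℕ → ℂ := fun k => χ ((k : ℕ) : ZMod f) *
    ((qBernoulliPoly (q ^ F) n ((x + (k : ℝ)) / (F : ℝ)) : ℝ) : ℂ) with hG
  have hGa : ∀ a : ℕ, χ ((a + 1 : ℕ) : ZMod f) *
      ((qBernoulliPoly (q ^ F) n ((x + ((a : ℝ) + 1)) / (F : ℝ)) : ℝ) : ℂ) = G (a + 1) := by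
    intro a
    simp only [hG]
    push_cast
    ring
  -- expansion of the first term
  have hm1 : f * (F / f) = F := Nat.mul_div_cancel' hfF
  have hm1p : 1 ≤ F / f := Nat.div_pos (Nat.le_of_dvd hF hfF) (by omega)
  have h1 := genQB_expand hf χ q hq0 hq1 (F / f) hm1p n hn x
  rw [hm1] at h1
  rw [Finset.sum_congr rfl (fun a _ => hGa a)] at h1
  -- the splitting of the full sum
  have hsplit := Finset.sum_filter_add_sum_filter_not (Finset.range F)
    (fun a => p ∣ (a + 1)) (fun a => G (a + 1))
  -- rewrite the goal's RHS sum via G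
  rw [Finset.sum_congr rfl (fun a _ => hGa a)]
  by_cases hpf : p ∣ f
  · -- χ(p) = 0 and all terms with p ∣ a+1 vanish
    have hχp : χ ((p : ℕ) : ZMod f) = 0 := by
      apply χ.map_nonunit
      rw [ZMod.isUnit_iff_coprime]
      intro hco
      have : p ∣ Nat.gcd p f := Nat.dvd_gcd dvd_rfl hpf
      rw [hco] at this
      have := Nat.le_of_dvd one_pos this
      have := hp.two_le
      omega
    have hzero : ∑ a ∈ (Finset.range F).filter (fun a => p ∣ (a + 1)), G (a + 1) = 0 := by
      apply Finset.sum_eq_zero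
      intro a ha
      simp only [Finset.mem_filter] at ha
      have hχa : χ ((a + 1 : ℕ) : ZMod f) = 0 := by
        apply χ.map_nonunit
        rw [ZMod.isUnit_iff_coprime]
        intro hco
        have : p ∣ Nat.gcd (a + 1) f := Nat.dvd_gcd ha.2 hpf
        rw [hco] at this
        have := Nat.le_of_dvd one_pos this
        have := hp.two_le
        omega
      simp only [hG, hχa, zero_mul]
    rw [hχp, zero_mul, zero_mul, sub_zero, h1, ← hsplit, hzero, zero_add]
  · -- p coprime to f
    have hco : Nat.Coprime p f := (Nat.Prime.coprime_iff_not_dvd hp).2 hpf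
    have hFp : p * (F / p) = F := Nat.mul_div_cancel' hpF
    have hFpp : 1 ≤ F / p := Nat.div_pos (Nat.le_of_dvd hF hpF) (by omega)
    have hfFp : f ∣ F / p := (Nat.dvd_div_iff_mul_dvd hpF).2 (by
      exact Nat.Coprime.mul_dvd_of_dvd_of_dvd hco hpF hfF)
    have hm2 : f * ((F / p) / f) = F / p := Nat.mul_div_cancel' hfFp
    have hm2p : 1 ≤ (F / p) / f := Nat.div_pos (Nat.le_of_dvd (by omega) hfFp) (by omega)
    have hqp0 : (0 : ℝ) < q ^ p := pow_pos hq0 p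
    have hqp1 : q ^ p < 1 := pow_lt_one₀ hq0.le hq1 (by omega)
    have h2 := genQB_expand hf χ (q ^ p) hqp0 hqp1 ((F / p) / f) hm2p n hn (x / p)
    rw [hm2] at h2
    -- identify the second term with [F]^{n-1} * ∑_{b} G (p*(b+1))
    have h3 : χ ((p : ℕ) : ZMod f) * ((qnum q (p : ℝ) : ℝ) : ℂ) ^ (n - 1)
        * genQBernoulliPoly χ (q ^ p) n (x / p)
        = ((qnum q (F : ℝ) : ℝ) : ℂ) ^ (n - 1) *
            ∑ b ∈ Finset.range (F / p), G (p * (b + 1)) := by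
      rw [h2]
      have hterm : ∀ b : ℕ, χ ((b + 1 : ℕ) : ZMod f) *
          ((qBernoulliPoly ((q ^ p) ^ (F / p)) n
            ((x / p + ((b : ℝ) + 1)) / ((F / p : ℕ) : ℝ)) : ℝ) : ℂ)
          = χ ((b + 1 : ℕ) : ZMod f) *
            ((qBernoulliPoly (q ^ F) n ((x + ((p * (b + 1) : ℕ) : ℝ)) / (F : ℝ)) : ℝ) : ℂ) := by
        intro b
        have harg : (x / p + ((b : ℝ) + 1)) / ((F / p : ℕ) : ℝ)
            = (x + ((p * (b + 1) : ℕ) : ℝ)) / (F : ℝ) := by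
          rw [Nat.cast_div hpF (by positivity)]
          push_cast
          field_simp
        rw [harg, ← pow_mul, hFp]
      rw [Finset.sum_congr rfl (fun b _ => hterm b)]
      have hfac : ((qnum q (p : ℝ) : ℝ) : ℂ) ^ (n - 1) *
          ((qnum (q ^ p) ((F / p : ℕ) : ℝ) : ℝ) : ℂ) ^ (n - 1)
          = ((qnum q (F : ℝ) : ℝ) : ℂ) ^ (n - 1) := by
        rw [← mul_pow, ← Complex.ofReal_mul, qnum_mul q hq0 hq1 p (F / p) hp1, hFp]
      have hRHS : ∑ b ∈ Finset.range (F / p), G (p * (b + 1))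
          = χ ((p : ℕ) : ZMod f) * ∑ b ∈ Finset.range (F / p), χ ((b + 1 : ℕ) : ZMod f) *
              ((qBernoulliPoly (q ^ F) n ((x + ((p * (b + 1) : ℕ) : ℝ)) / (F : ℝ)) : ℝ) : ℂ) := by
        rw [Finset.mul_sum]
        apply Finset.sum_congr rfl
        intro b _
        simp only [hG, Nat.cast_mul, map_mul]
        ring
      rw [hRHS, ← hfac]
      ring
    rw [h1, h3, ← sum_filter_dvd p F hp.pos hpF G, ← hsplit]
    ring
end
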